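/- arXiv:1401.2792 — 6 statements merged into one kernel-verified Lean document; each statement's English description precedes it below -/
import Mathlib

section
/- For all reals a > 0, b > 0 and all x ∈ [0,1], the scaled-Gamma CDF is dominated by the Beta CDF: (∫_0^x y^{a−1} e^{−by} dy) / (∫_0^∞ y^{a−1} e^{−by} dy) ≤ (∫_0^x y^{a−1} (1−y)^b dy) / (∫_0^1 y^{a−1} (1−y)^b dy). -/
/-!
On `(0, 1]` the ratio of the Beta integrand `y ^ (a - 1) * (1 - y) ^ b` to the Gamma integrand
`y ^ (a - 1) * exp (-(b * y))` is `((1 - y) * exp y) ^ b`, which is nonincreasing. Hence for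
`y ≤ x < z` the cross products of the two integrands compare, and integrating over `y ∈ (0, x]`
and `z ∈ (x, 1]` gives `Γ(0, x] · B(x, 1] ≤ B(0, x] · Γ(x, 1]`. Adding `Γ(0, x] · B(0, x]` to both
sides, and the nonnegative Gamma mass of `(1, ∞)` to the right, yields the comparison of the
normalised distribution functions.
-/

open MeasureTheory Real Set

section CrossProducts

variable {α : Type*} [MeasurableSpace α] {μ : Measure α} {f g : α → ℝ} {S T : Set α}

theorem setIntegral_mul_setIntegral_le_of_cross (hS : MeasurableSet S) (hT : MeasurableSet T)
    (hfS : IntegrableOn f S μ) (hgS : IntegrableOn g S μ)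
    (hfT : IntegrableOn f T μ) (hgT : IntegrableOn g T μ)
    (hcross : ∀ y ∈ S, ∀ z ∈ T, f y * g z ≤ g y * f z) :
    (∫ y in S, f y ∂μ) * (∫ z in T, g z ∂μ) ≤ (∫ y in S, g y ∂μ) * (∫ z in T, f z ∂μ) := by
  rw [← integral_mul_const, ← integral_mul_const]
  refine setIntegral_mono_on (hfS.mul_const _) (hgS.mul_const _) hS fun y hy => ?_
  rw [← integral_const_mul, ← integral_const_mul]
  exact setIntegral_mono_on (hgT.const_mul _) (hfT.const_mul _) hT (hcross y hy)

end CrossProducts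

theorem setIntegral_Ioc_div_le_setIntegral_Ioc_div_of_cross {μ : Measure ℝ} {f g : ℝ → ℝ}
    {x : ℝ} (hx : x ∈ Icc (0 : ℝ) 1)
    (hf : IntegrableOn f (Ioi 0) μ) (hg : IntegrableOn g (Ioc 0 1) μ)
    (hf_nonneg : ∀ y ∈ Ioi (1 : ℝ), 0 ≤ f y) (hg_nonneg : ∀ y ∈ Ioc 0 x, 0 ≤ g y)
    (hf_pos : 0 < ∫ y in Ioi 0, f y ∂μ) (hg_pos : 0 < ∫ y in Ioc 0 1, g y ∂μ)
    (hcross : ∀ y ∈ Ioc 0 x, ∀ z ∈ Ioc x 1, f y * g z ≤ g y * f z) :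
    (∫ y in Ioc 0 x, f y ∂μ) / (∫ y in Ioi 0, f y ∂μ) ≤
      (∫ y in Ioc 0 x, g y ∂μ) / (∫ y in Ioc 0 1, g y ∂μ) := by
  obtain ⟨hx0, hx1⟩ := hx
  have hf_head : IntegrableOn f (Ioc 0 x) μ := hf.mono_set Ioc_subset_Ioi_self
  have hf_mid : IntegrableOn f (Ioc x 1) μ :=
    hf.mono_set (Ioc_subset_Ioc_left hx0 |>.trans Ioc_subset_Ioi_self)
  have hf_tail : IntegrableOn f (Ioi 1) μ := hf.mono_set (Ioi_subset_Ioi zero_le_one)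
  have hg_head : IntegrableOn g (Ioc 0 x) μ := hg.mono_set (Ioc_subset_Ioc_right hx1)
  have hg_mid : IntegrableOn g (Ioc x 1) μ := hg.mono_set (Ioc_subset_Ioc_left hx0)
  have hf_split : ∫ y in Ioi 0, f y ∂μ =
      (∫ y in Ioc 0 x, f y ∂μ) + ((∫ y in Ioc x 1, f y ∂μ) + ∫ y in Ioi 1, f y ∂μ) := by
    rw [← setIntegral_union (Ioc_disjoint_Ioi le_rfl) measurableSet_Ioi hf_mid hf_tail,
      Ioc_union_Ioi_eq_Ioi hx1, ← setIntegral_union (Ioc_disjoint_Ioi le_rfl) measurableSet_Ioi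
        hf_head (hf.mono_set (Ioi_subset_Ioi hx0)), Ioc_union_Ioi_eq_Ioi hx0]
  have hg_split : ∫ y in Ioc 0 1, g y ∂μ = (∫ y in Ioc 0 x, g y ∂μ) + ∫ y in Ioc x 1, g y ∂μ := by
    rw [← setIntegral_union (Ioc_disjoint_Ioc_of_le le_rfl) measurableSet_Ioc hg_head hg_mid,
      Ioc_union_Ioc_eq_Ioc hx0 hx1]
  have hcross_int := setIntegral_mul_setIntegral_le_of_cross measurableSet_Ioc measurableSet_Ioc
    hf_head hg_head hf_mid hg_mid hcross
  have hg_head_nonneg : 0 ≤ ∫ y in Ioc 0 x, g y ∂μ := setIntegral_nonneg measurableSet_Ioc hg_nonneg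
  have hf_tail_nonneg : 0 ≤ ∫ y in Ioi 1, f y ∂μ := setIntegral_nonneg measurableSet_Ioi hf_nonneg
  rw [div_le_div_iff₀ hf_pos hg_pos, hf_split, hg_split]
  nlinarith [mul_nonneg hg_head_nonneg hf_tail_nonneg]

theorem exp_neg_mul_mul_one_sub_rpow_le {b y z : ℝ} (hb : 0 ≤ b) (hy : 0 ≤ y) (hyz : y ≤ z)
    (hz : z ≤ 1) : exp (-(b * y)) * (1 - z) ^ b ≤ (1 - y) ^ b * exp (-(b * z)) := by
  -- `(1 - y) * exp (y - z) ≥ (1 - y) * (1 + y - z) = 1 - z + y * (z - y)`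
  have hbase : 1 - z ≤ (1 - y) * exp (y - z) := by
    nlinarith [add_one_le_exp (y - z), exp_pos (y - z)]
  calc exp (-(b * y)) * (1 - z) ^ b
      ≤ exp (-(b * y)) * ((1 - y) * exp (y - z)) ^ b := by gcongr
    _ = (1 - y) ^ b * exp (-(b * z)) := by
        rw [mul_rpow (by linarith) (exp_pos _).le, ← exp_mul, mul_left_comm, ← exp_add]
        ring_nf

theorem integrableOn_rpow_mul_exp_neg_mul {a b : ℝ} (ha : 0 < a) (hb : 0 < b) :
    IntegrableOn (fun y : ℝ => y ^ (a - 1) * exp (-(b * y))) (Ioi 0) := by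
  refine (integrableOn_rpow_mul_exp_neg_mul_rpow (s := a - 1) (by linarith) one_pos hb).congr_fun
    (fun y _ => ?_) measurableSet_Ioi
  simp only [rpow_one, neg_mul]

theorem intervalIntegrable_rpow_mul_one_sub_rpow {a b : ℝ} (ha : 0 < a) (hb : 0 ≤ b) :
    IntervalIntegrable (fun y : ℝ => y ^ (a - 1) * (1 - y) ^ b) volume 0 1 := by
  refine (intervalIntegral.intervalIntegrable_rpow' (r := a - 1) (by linarith)).mono_fun'
    (by fun_prop : Measurable _).aestronglyMeasurable ?_
  rw [uIoc_of_le zero_le_one]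
  refine ae_restrict_of_forall_mem measurableSet_Ioc fun y ⟨hy0, hy1⟩ => ?_
  dsimp only
  rw [norm_of_nonneg (mul_nonneg (rpow_nonneg hy0.le _) (rpow_nonneg (by linarith) _))]
  exact mul_le_of_le_one_right (rpow_nonneg hy0.le _) (rpow_le_one (by linarith) (by linarith) hb)

/-- For all reals `a > 0`, `b > 0` and all `x ∈ [0,1]`, the scaled-Gamma CDF is
dominated by the Beta CDF:
`(∫_0^x y^(a-1) e^(-by) dy) / (∫_0^∞ y^(a-1) e^(-by) dy)
  ≤ (∫_0^x y^(a-1) (1-y)^b dy) / (∫_0^1 y^(a-1) (1-y)^b dy)`. -/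
theorem gamma_cdf_le_beta_cdf (a b : ℝ) (ha : 0 < a) (hb : 0 < b)
    (x : ℝ) (hx : x ∈ Set.Icc (0:ℝ) 1) :
    (∫ y in Set.Ioc (0:ℝ) x, y ^ (a - 1) * Real.exp (-(b * y))) /
        (∫ y in Set.Ioi (0:ℝ), y ^ (a - 1) * Real.exp (-(b * y))) ≤
      (∫ y in Set.Ioc (0:ℝ) x, y ^ (a - 1) * (1 - y) ^ b) /
        (∫ y in Set.Ioc (0:ℝ) 1, y ^ (a - 1) * (1 - y) ^ b) := by
  have hbeta := intervalIntegrable_rpow_mul_one_sub_rpow ha hb.le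
  have hbeta_pos : 0 < ∫ y in Ioc (0 : ℝ) 1, y ^ (a - 1) * (1 - y) ^ b := by
    rw [← intervalIntegral.integral_of_le zero_le_one]
    exact intervalIntegral.intervalIntegral_pos_of_pos_on hbeta
      (fun y hy => mul_pos (rpow_pos_of_pos hy.1 _) (rpow_pos_of_pos (by linarith [hy.2]) _))
      one_pos
  have hgamma_pos : 0 < ∫ y in Ioi (0 : ℝ), y ^ (a - 1) * exp (-(b * y)) := by
    rw [integral_rpow_mul_exp_neg_mul_Ioi ha hb]
    positivity
  refine setIntegral_Ioc_div_le_setIntegral_Ioc_div_of_cross hx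
    (integrableOn_rpow_mul_exp_neg_mul ha hb)
    ((intervalIntegrable_iff_integrableOn_Ioc_of_le zero_le_one).1 hbeta)
    (fun y hy => mul_nonneg (rpow_nonneg (zero_le_one.trans hy.le) _) (exp_pos _).le)
    (fun y hy => mul_nonneg (rpow_nonneg hy.1.le _) (rpow_nonneg (by linarith [hy.2, hx.2]) _))
    hgamma_pos hbeta_pos fun y hy z hz => ?_
  have hweight : 0 ≤ y ^ (a - 1) * z ^ (a - 1) :=
    mul_nonneg (rpow_nonneg hy.1.le _) (rpow_nonneg (hx.1.trans hz.1.le) _)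
  have hratio := exp_neg_mul_mul_one_sub_rpow_le hb.le hy.1.le (hy.2.trans hz.1.le) hz.2
  calc y ^ (a - 1) * exp (-(b * y)) * (z ^ (a - 1) * (1 - z) ^ b)
      = y ^ (a - 1) * z ^ (a - 1) * (exp (-(b * y)) * (1 - z) ^ b) := by ring
    _ ≤ y ^ (a - 1) * z ^ (a - 1) * ((1 - y) ^ b * exp (-(b * z))) := by gcongr
    _ = y ^ (a - 1) * (1 - y) ^ b * (z ^ (a - 1) * exp (-(b * z))) := by ring
end

section
/- For all integers 2 ≤ k ≤ ℓ, the expectation E[φ_k^{(ℓ)}] = E[ψ_k] · ∏_{i=k+1}^{ℓ} (1 − E[ψ_i]) of φ_k^{(ℓ)} = ψ_k ∏_{i=k+1}^{ℓ}(1−ψ_i) satisfies the two-sided bound (χ/k)·((k−1)/(ℓ−1))^χ ≤ E[φ_k^{(ℓ)}] ≤ (χ/(k−1))·((k+1)/(ℓ+1))^χ. -/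
open MeasureTheory ProbabilityTheory Real

/-- The Beta(p,q) measure on ℝ: density `x^(p-1)(1-x)^(q-1)/B(p,q)` on `(0,1)`. -/
noncomputable def betaMeasure (p q : ℝ) : Measure ℝ :=
  MeasureTheory.volume.withDensity fun x => ENNReal.ofReal
    ((Set.Ioo (0:ℝ) 1).indicator
      (fun t => t ^ (p - 1) * (1 - t) ^ (q - 1) /
        ∫ s in Set.Ioo (0:ℝ) 1, s ^ (p - 1) * (1 - s) ^ (q - 1)) x)

/-!
The mean of `Beta(p, q)` is `B(p + 1, q) / B(p, q) = p / (p + q)`, which for the shape parameters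
of `ψ_j` is `χ / (j - 2 + 2χ)`. Independence factorises `E[φ_k^(ℓ)]` as
`χ / (k - 2 + 2χ) · ∏_{i=k+1}^ℓ (1 - χ / (i - 2 + 2χ))`. Bernoulli's inequality
`(1 + s)^χ ≤ 1 + χ s` squeezes the `i`-th factor between `((i - 2) / (i - 1))^χ`
(this side needs `χ ≥ 1/2`) and `(i / (i + 1))^χ`, and both bounds telescope.
-/

open Set Finset

namespace ProbabilityTheory

section Beta

variable {p q : ℝ}

theorem setIntegral_Ioo_rpow_mul_one_sub_rpow (hp : 0 < p) (hq : 0 < q) :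
    ∫ x in Ioo (0:ℝ) 1, x ^ (p - 1) * (1 - x) ^ (q - 1) = beta p q := by
  have h := lintegral_betaPDF_eq_one hp hq
  rw [lintegral_betaPDF, ← ENNReal.toReal_eq_one_iff, ← integral_eq_lintegral_of_nonneg_ae] at h
  · simp_rw [mul_assoc, integral_const_mul] at h
    field_simp [(beta_pos hp hq).ne'] at h
    exact h
  · filter_upwards [ae_restrict_mem measurableSet_Ioo] with x hx
    have : 0 ≤ 1 - x := by linarith [hx.2]
    have := hx.1.le
    have := beta_pos hp hq
    positivity
  · exact Measurable.aestronglyMeasurable (by fun_prop)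

theorem beta_add_one_left (hp : 0 < p) (hq : 0 < q) : beta (p + 1) q = p / (p + q) * beta p q := by
  have hpq : Real.Gamma (p + q) ≠ 0 := (Real.Gamma_pos_of_pos (by linarith)).ne'
  rw [beta, beta, add_right_comm, Real.Gamma_add_one hp.ne', Real.Gamma_add_one (by linarith)]
  field_simp

theorem integral_id_betaMeasure (hp : 0 < p) (hq : 0 < q) :
    ∫ x, x ∂betaMeasure p q = p / (p + q) := by
  have hpdf : (fun x => (betaPDF p q x).toReal • x) =
      (Ioo (0:ℝ) 1).indicator
        (fun x => 1 / beta p q * (x ^ (p + 1 - 1) * (1 - x) ^ (q - 1))) := by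
    ext x
    by_cases hx : x ∈ Ioo (0:ℝ) 1
    · have := beta_pos hp hq
      have := hx.1.le
      have : 0 ≤ 1 - x := by linarith [hx.2]
      rw [betaPDF_of_pos_lt_one hx.1 hx.2, indicator_of_mem hx,
        ENNReal.toReal_ofReal (by positivity), smul_eq_mul, add_sub_cancel_right,
        rpow_sub_one hx.1.ne']
      field_simp [hx.1.ne']
    · rw [indicator_of_notMem hx, betaPDF_eq, if_neg (show ¬(0 < x ∧ x < 1) from hx)]
      simp
  rw [betaMeasure, integral_withDensity_eq_integral_toReal_smul (f := betaPDF p q)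
      (by unfold betaPDF; fun_prop) (ae_of_all _ fun _ => ENNReal.ofReal_lt_top), hpdf,
    integral_indicator measurableSet_Ioo, integral_const_mul,
    setIntegral_Ioo_rpow_mul_one_sub_rpow (by linarith) hq, beta_add_one_left hp hq]
  field_simp [(beta_pos hp hq).ne']

-- A non-integrable function has Bochner integral `0`, and the mean `p / (p + q)` is not `0`.
theorem integrable_id_betaMeasure (hp : 0 < p) (hq : 0 < q) : Integrable id (betaMeasure p q) :=
  .of_integral_ne_zero (by simp only [id, integral_id_betaMeasure hp hq]; positivity)

variable {Ω : Type*} [MeasurableSpace Ω] {μ : Measure Ω} {Y : Ω → ℝ}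

theorem integrable_of_map_eq_betaMeasure (hY : AEMeasurable Y μ)
    (hlaw : μ.map Y = betaMeasure p q) (hp : 0 < p) (hq : 0 < q) : Integrable Y μ :=
  (integrable_map_measure aestronglyMeasurable_id hY).mp (hlaw ▸ integrable_id_betaMeasure hp hq)

theorem integral_eq_of_map_eq_betaMeasure (hY : AEMeasurable Y μ)
    (hlaw : μ.map Y = betaMeasure p q) (hp : 0 < p) (hq : 0 < q) :
    ∫ ω, Y ω ∂μ = p / (p + q) := by
  rw [← integral_map (f := fun x => x) hY aestronglyMeasurable_id, hlaw,
    integral_id_betaMeasure hp hq]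

end Beta

section Independence

variable {Ω ι : Type*} [MeasurableSpace Ω] {μ : Measure Ω} {X : ι → Ω → ℝ}

theorem iIndepFun.integral_finset_prod_comp (hX : iIndepFun X μ) (mX : ∀ i, Measurable (X i))
    {f : ι → ℝ → ℝ} (hf : ∀ i, Measurable (f i)) (s : Finset ι) :
    ∫ ω, ∏ i ∈ s, f i (X i ω) ∂μ = ∏ i ∈ s, ∫ ω, f i (X i ω) ∂μ := by
  have := (hX.precomp Subtype.val_injective).integral_fun_prod_comp (f := fun i : s => f i)
    (fun i => (mX i).aemeasurable) (fun i => (hf i).aestronglyMeasurable)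
  simp_rw [← Finset.prod_coe_sort s]
  exact this

theorem iIndepFun.integral_mul_prod_one_sub [DecidableEq ι] (hX : iIndepFun X μ)
    (mX : ∀ i, Measurable (X i)) {k : ι} {s : Finset ι} (hk : k ∉ s)
    (hint : ∀ i ∈ s, Integrable (X i) μ) :
    ∫ ω, X k ω * ∏ i ∈ s, (1 - X i ω) ∂μ =
      (∫ ω, X k ω ∂μ) * ∏ i ∈ s, (1 - ∫ ω, X i ω ∂μ) := by
  have := hX.isProbabilityMeasure
  let f : ι → ℝ → ℝ := Function.update (fun _ x => 1 - x) k id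
  have hfs : ∀ i ∈ s, f i = fun x => 1 - x := fun i hi =>
    Function.update_of_ne (ne_of_mem_of_not_mem hi hk) _ _
  have hfk : f k = id := Function.update_self _ _ _
  have mf : ∀ i, Measurable (f i) := by
    intro i
    rcases eq_or_ne i k with rfl | hik
    · rw [hfk]; exact measurable_id
    · simp only [f, Function.update_of_ne hik]; fun_prop
  have hprod : ∀ ω, ∏ i ∈ s, f i (X i ω) = ∏ i ∈ s, (1 - X i ω) := fun ω =>
    prod_congr rfl fun i hi => by rw [hfs i hi]
  have key := hX.integral_finset_prod_comp mX mf (insert k s)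
  simp only [prod_insert hk, hfk, id, hprod] at key
  rw [key]
  congr 1
  refine prod_congr rfl fun i hi => ?_
  rw [hfs i hi, integral_sub (integrable_const 1) (hint i hi)]
  simp

end Independence

end ProbabilityTheory

theorem betaMeasure_eq_probabilityTheory_betaMeasure {p q : ℝ} (hp : 0 < p) (hq : 0 < q) :
    _root_.betaMeasure p q = ProbabilityTheory.betaMeasure p q := by
  rw [_root_.betaMeasure, ProbabilityTheory.betaMeasure,
    setIntegral_Ioo_rpow_mul_one_sub_rpow hp hq]
  congr with x
  rw [betaPDF_eq]
  by_cases hx : 0 < x ∧ x < 1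
  · rw [indicator_of_mem (s := Ioo 0 1) hx, if_pos hx]
    ring_nf
  · rw [indicator_of_notMem (s := Ioo 0 1) hx, if_neg hx]

section Telescoping

variable {f g : ℕ → ℝ} {k ℓ : ℕ}

theorem div_le_prod_Icc_of_div_le (hkℓ : k ≤ ℓ) (hg : ∀ i, k ≤ i → 0 < g i)
    (hfg : ∀ i, k ≤ i → g i / g (i + 1) ≤ f (i + 1)) :
    g k / g ℓ ≤ ∏ i ∈ Icc (k + 1) ℓ, f i := by
  induction ℓ, hkℓ using Nat.le_induction with
  | base => simp [div_self (hg k le_rfl).ne']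
  | succ n hkn ih =>
    rw [prod_Icc_succ_top (by omega), ← div_mul_div_cancel₀ (hg n hkn).ne']
    have := div_pos (hg k le_rfl) (hg n hkn)
    exact mul_le_mul ih (hfg n hkn) (div_pos (hg n hkn) (hg (n + 1) (by omega))).le (by linarith)

theorem prod_Icc_le_div_of_le_div (hkℓ : k ≤ ℓ) (hg : ∀ i, k ≤ i → 0 < g i)
    (hf : ∀ i, k ≤ i → 0 ≤ f (i + 1))
    (hfg : ∀ i, k ≤ i → f (i + 1) ≤ g i / g (i + 1)) :
    ∏ i ∈ Icc (k + 1) ℓ, f i ≤ g k / g ℓ := by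
  induction ℓ, hkℓ using Nat.le_induction with
  | base => simp [div_self (hg k le_rfl).ne']
  | succ n hkn ih =>
    rw [prod_Icc_succ_top (by omega), ← div_mul_div_cancel₀ (hg n hkn).ne']
    exact mul_le_mul ih (hfg n hkn) (hf n hkn) (div_pos (hg k le_rfl) (hg n hkn)).le

end Telescoping

section Factor

variable {a χ : ℝ}

theorem rpow_div_add_one_le_one_sub_div (ha : 0 ≤ a) (hχ : 1 / 2 ≤ χ) (hχ1 : χ ≤ 1) :
    (a / (a + 1)) ^ χ ≤ 1 - χ / (a + 2 * χ) :=
  calc (a / (a + 1)) ^ χ = (1 + -(1 / (a + 1))) ^ χ := by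
        congr 1; field_simp; ring
    _ ≤ 1 + χ * -(1 / (a + 1)) := by
        refine rpow_one_add_le_one_add_mul_self ?_ (by linarith) hχ1
        rw [neg_le_neg_iff, div_le_one (by linarith)]; linarith
    _ ≤ 1 - χ / (a + 2 * χ) := by
        rw [mul_neg, ← sub_eq_add_neg, sub_le_sub_iff_left, mul_one_div,
          div_le_div_iff₀ (by linarith) (by linarith)]
        nlinarith

theorem one_sub_div_le_rpow_add_two_div_add_three (ha : 0 ≤ a) (hχ : 0 < χ) (hχ1 : χ ≤ 1) :
    1 - χ / (a + 2 * χ) ≤ ((a + 2) / (a + 3)) ^ χ :=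
  calc 1 - χ / (a + 2 * χ) ≤ ((a + 2 + χ) / (a + 2))⁻¹ := by
        rw [inv_div, one_sub_div (by linarith), div_le_div_iff₀ (by linarith) (by linarith)]
        nlinarith
    _ ≤ ((1 + 1 / (a + 2)) ^ χ)⁻¹ := by
        refine inv_anti₀ (by positivity) ?_
        calc (1 + 1 / (a + 2)) ^ χ ≤ 1 + χ * (1 / (a + 2)) :=
              rpow_one_add_le_one_add_mul_self
                (by linarith [show 0 ≤ 1 / (a + 2) by positivity]) hχ.le hχ1
          _ = (a + 2 + χ) / (a + 2) := by field_simp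
    _ = ((a + 2) / (a + 3)) ^ χ := by
        rw [← inv_rpow (by positivity)]
        congr 1
        field_simp
        ring

end Factor

noncomputable def psiMean (χ : ℝ) (j : ℕ) : ℝ := χ / ((j : ℝ) - 2 + 2 * χ)

section ProductBounds

variable {χ : ℝ} {k ℓ : ℕ}

theorem div_mul_rpow_le_psiMean_mul_prod (hχ : 1 / 2 ≤ χ) (hχ1 : χ ≤ 1) (hk : 2 ≤ k)
    (hkℓ : k ≤ ℓ) :
    χ / k * (((k : ℝ) - 1) / ((ℓ : ℝ) - 1)) ^ χ ≤
      psiMean χ k * ∏ i ∈ Icc (k + 1) ℓ, (1 - psiMean χ i) := by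
  have two_le : ∀ i, k ≤ i → (2 : ℝ) ≤ i := fun i hi => by exact_mod_cast hk.trans hi
  have hk' := two_le k le_rfl
  have hℓ := two_le ℓ hkℓ
  refine mul_le_mul (div_le_div_of_nonneg_left (by linarith) (by linarith) (by linarith)) ?_
    (rpow_nonneg (div_nonneg (by linarith) (by linarith)) _)
    (div_nonneg (by linarith) (by linarith))
  rw [div_rpow (by linarith) (by linarith)]
  refine div_le_prod_Icc_of_div_le (g := fun i => ((i : ℝ) - 1) ^ χ) hkℓ
    (fun i hi => rpow_pos_of_pos (by linarith [two_le i hi]) _) fun i hi => ?_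
  have := rpow_div_add_one_le_one_sub_div (a := (i : ℝ) - 1) (by linarith [two_le i hi]) hχ hχ1
  rw [← div_rpow (by linarith [two_le i hi]) (by push_cast; linarith [two_le i hi]), psiMean]
  convert this using 3 <;> push_cast <;> ring

theorem psiMean_mul_prod_le_div_mul_rpow (hχ : 1 / 2 ≤ χ) (hχ1 : χ ≤ 1) (hk : 2 ≤ k)
    (hkℓ : k ≤ ℓ) :
    psiMean χ k * ∏ i ∈ Icc (k + 1) ℓ, (1 - psiMean χ i) ≤
      χ / ((k : ℝ) - 1) * (((k : ℝ) + 1) / ((ℓ : ℝ) + 1)) ^ χ := by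
  have two_le : ∀ i, k ≤ i → (2 : ℝ) ≤ i := fun i hi => by exact_mod_cast hk.trans hi
  have hk' := two_le k le_rfl
  have factor_nonneg : ∀ i, k ≤ i → 0 ≤ 1 - psiMean χ i := fun i hi => by
    rw [psiMean, sub_nonneg, div_le_one (by linarith [two_le i hi])]
    linarith [two_le i hi]
  refine mul_le_mul (div_le_div_of_nonneg_left (by linarith) (by linarith) (by linarith)) ?_
    (prod_nonneg fun i hi => factor_nonneg i (by simp at hi; omega))
    (div_nonneg (by linarith) (by linarith))
  rw [div_rpow (by linarith) (by positivity)]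
  refine prod_Icc_le_div_of_le_div (g := fun i => ((i : ℝ) + 1) ^ χ) hkℓ
    (fun i hi => by positivity) (fun i hi => factor_nonneg (i + 1) (by omega)) fun i hi => ?_
  have := one_sub_div_le_rpow_add_two_div_add_three (a := (i : ℝ) - 1)
    (by linarith [two_le i hi]) (by linarith) hχ1
  rw [← div_rpow (by positivity) (by positivity), psiMean]
  convert this using 3 <;> push_cast <;> ring

end ProductBounds

theorem shape_ratio_eq_psiMean {m u χ : ℝ} {j : ℕ} (hm : 0 < m) (hu : 0 ≤ u)
    (hχ : χ = (1 + 2 * u) / (2 + 2 * u)) (hj : 2 ≤ j) :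
    (m + 2 * m * u) / ((m + 2 * m * u) + ((2 * (j : ℝ) - 3) * m + 2 * m * u * ((j : ℝ) - 1))) =
      psiMean χ j := by
  have : (2 : ℝ) ≤ j := by exact_mod_cast hj
  rw [psiMean, hχ]
  field_simp
  rw [div_eq_div_iff (by nlinarith) (by nlinarith)]
  ring

theorem phi_expectation_bounds_general {Ω : Type*} [MeasurableSpace Ω] (μ : Measure Ω)
    (m : ℕ) (hm : 2 ≤ m) (α : ℝ) (hα : α ∈ Set.Ico (0:ℝ) 1)
    (u χ : ℝ) (hu : u = α / (1 - α)) (hχ : χ = (1 + 2*u) / (2 + 2*u))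
    (ψ : ℕ → Ω → ℝ) (hmeas : ∀ j, Measurable (ψ j))
    (hindep : iIndepFun ψ μ)
    (hdist : ∀ j : ℕ, 2 ≤ j → Measure.map (ψ j) μ =
      _root_.betaMeasure (m + 2*m*u) ((2*(j:ℝ) - 3)*m + 2*m*u*((j:ℝ) - 1)))
    (k ℓ : ℕ) (hk : 2 ≤ k) (hkℓ : k ≤ ℓ) :
    (∫ ω, ψ k ω * ∏ i ∈ Finset.Icc (k+1) ℓ, (1 - ψ i ω) ∂μ) =
        (∫ ω, ψ k ω ∂μ) * ∏ i ∈ Finset.Icc (k+1) ℓ, (1 - ∫ ω, ψ i ω ∂μ) ∧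
      (χ / k) * (((k:ℝ) - 1) / ((ℓ:ℝ) - 1)) ^ χ ≤
        (∫ ω, ψ k ω * ∏ i ∈ Finset.Icc (k+1) ℓ, (1 - ψ i ω) ∂μ) ∧
      (∫ ω, ψ k ω * ∏ i ∈ Finset.Icc (k+1) ℓ, (1 - ψ i ω) ∂μ) ≤
        (χ / ((k:ℝ) - 1)) * (((k:ℝ) + 1) / ((ℓ:ℝ) + 1)) ^ χ := by
  have hu0 : 0 ≤ u := hu ▸ div_nonneg hα.1 (by linarith [hα.2])
  have hχ_ge : 1 / 2 ≤ χ := by rw [hχ, le_div_iff₀ (by linarith)]; linarith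
  have hχ_le : χ ≤ 1 := by rw [hχ, div_le_one (by linarith)]; linarith
  have hm0 : (0 : ℝ) < m := by exact_mod_cast (by omega : 0 < m)
  have hp : (0 : ℝ) < m + 2 * m * u := by positivity
  have hq : ∀ j : ℕ, 2 ≤ j →
      (0 : ℝ) < (2 * (j : ℝ) - 3) * m + 2 * m * u * ((j : ℝ) - 1) := fun j hj => by
    nlinarith [show (2 : ℝ) ≤ j by exact_mod_cast hj]
  have hlaw : ∀ j, 2 ≤ j → μ.map (ψ j) = ProbabilityTheory.betaMeasure (m + 2 * m * u)
      ((2 * (j : ℝ) - 3) * m + 2 * m * u * ((j : ℝ) - 1)) := fun j hj => by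
    rw [hdist j hj, betaMeasure_eq_probabilityTheory_betaMeasure hp (hq j hj)]
  have hint : ∀ j, 2 ≤ j → Integrable (ψ j) μ := fun j hj =>
    integrable_of_map_eq_betaMeasure (hmeas j).aemeasurable (hlaw j hj) hp (hq j hj)
  have hmean : ∀ j, 2 ≤ j → ∫ ω, ψ j ω ∂μ = psiMean χ j := fun j hj => by
    rw [integral_eq_of_map_eq_betaMeasure (hmeas j).aemeasurable (hlaw j hj) hp (hq j hj),
      shape_ratio_eq_psiMean hm0 hu0 hχ hj]
  have hfact := hindep.integral_mul_prod_one_sub hmeas (k := k) (s := Icc (k + 1) ℓ) (by simp)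
    fun i hi => hint i (by simp at hi; omega)
  have hclosed : (∫ ω, ψ k ω ∂μ) * ∏ i ∈ Icc (k + 1) ℓ, (1 - ∫ ω, ψ i ω ∂μ) =
      psiMean χ k * ∏ i ∈ Icc (k + 1) ℓ, (1 - psiMean χ i) := by
    rw [hmean k hk]
    exact congrArg _ (prod_congr rfl fun i hi => by rw [hmean i (by simp at hi; omega)])
  refine ⟨hfact, ?_, ?_⟩ <;> rw [hfact, hclosed]
  · exact div_mul_rpow_le_psiMean_mul_prod hχ_ge hχ_le hk hkℓ
  · exact psiMean_mul_prod_le_div_mul_rpow hχ_ge hχ_le hk hkℓ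

/-- For all integers `2 ≤ k ≤ ℓ`, the expectation
`E[φ_k^(ℓ)] = E[ψ_k] ∏_{i=k+1}^ℓ (1 − E[ψ_i])` of `φ_k^(ℓ) = ψ_k ∏_{i=k+1}^ℓ (1 − ψ_i)`
satisfies `(χ/k)((k-1)/(ℓ-1))^χ ≤ E[φ_k^(ℓ)] ≤ (χ/(k-1))((k+1)/(ℓ+1))^χ`, where the
`ψ_j ~ Beta(m+2mu, (2j-3)m+2mu(j-1))` are independent, `u = α/(1-α)`, `χ = (1+2u)/(2+2u)`. -/
theorem phi_expectation_bounds {Ω : Type*} [MeasurableSpace Ω] (μ : Measure Ω)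
    [IsProbabilityMeasure μ] (m : ℕ) (hm : 2 ≤ m) (α : ℝ) (hα : α ∈ Set.Ico (0:ℝ) 1)
    (u χ : ℝ) (hu : u = α / (1 - α)) (hχ : χ = (1 + 2*u) / (2 + 2*u))
    (ψ : ℕ → Ω → ℝ) (hmeas : ∀ j, Measurable (ψ j))
    (hindep : iIndepFun ψ μ)
    (hdist : ∀ j : ℕ, 2 ≤ j → Measure.map (ψ j) μ =
      _root_.betaMeasure (m + 2*m*u) ((2*(j:ℝ) - 3)*m + 2*m*u*((j:ℝ) - 1)))
    (k ℓ : ℕ) (hk : 2 ≤ k) (hkℓ : k ≤ ℓ) :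
    (∫ ω, ψ k ω * ∏ i ∈ Finset.Icc (k+1) ℓ, (1 - ψ i ω) ∂μ) =
        (∫ ω, ψ k ω ∂μ) * ∏ i ∈ Finset.Icc (k+1) ℓ, (1 - ∫ ω, ψ i ω ∂μ) ∧
      (χ / k) * (((k:ℝ) - 1) / ((ℓ:ℝ) - 1)) ^ χ ≤
        (∫ ω, ψ k ω * ∏ i ∈ Finset.Icc (k+1) ℓ, (1 - ψ i ω) ∂μ) ∧
      (∫ ω, ψ k ω * ∏ i ∈ Finset.Icc (k+1) ℓ, (1 - ψ i ω) ∂μ) ≤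
        (χ / ((k:ℝ) - 1)) * (((k:ℝ) + 1) / ((ℓ:ℝ) + 1)) ^ χ :=
  phi_expectation_bounds_general μ m hm α hα u χ hu hχ ψ hmeas hindep hdist k ℓ hk hkℓ
end

section
/- There exists a constant C < ∞, depending only on m and α, with the following property. Let n ≥ 3 be an integer, let d be a real with m ≤ d ≤ 2m(n−2), set p = α/(n−1) + (1−α)d/(2m(n−2)), and for r ∈ {0,1,…,m} and l ∈ {0,1,…,m−1} set p_l(r) = (2mα + (1−α)(d + min(l,r))) / (2m(n−2) + 2mα + (1−α)l). Then max_{0 ≤ r ≤ m} | ∏_{l=0}^{r−1} p_l(r) · ∏_{l=r}^{m−1} (1 − p_l(r)) − p^r (1−p)^{m−r} | ≤ C·d/n². -/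
/-!
Both sides are products over the `m` trials `l < m`, with success probabilities `p_l(r)` and `p`,
and `|p_l(r) - p| = O(d/n²) + O(min(l,r)/(mn))`. For `r = 0` every error is `O(d/n²)`, and two
products of numbers in `[0,1]` differ by at most the sum of the errors. For `r ≥ 1` split off the
trial `l = 0`, whose error is `O(d/n²)`; the rest of `p^r (1-p)^(m-r)` still carries a factor
`p = O(d/n)`, which turns the `O(1/n)` errors of the other trials into `O(d/n²)`.
-/

open Finset

theorem abs_mul_sub_mul_le {a b x y : ℝ} (hx : |x| ≤ 1) :
    |a * x - b * y| ≤ |a - b| + |b| * |x - y| := by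
  calc |a * x - b * y| = |(a - b) * x + b * (x - y)| := by congr 1; ring
    _ ≤ |a - b| * |x| + |b| * |x - y| := by rw [← abs_mul, ← abs_mul]; exact abs_add_le _ _
    _ ≤ |a - b| + |b| * |x - y| := by gcongr; exact mul_le_of_le_one_right (abs_nonneg _) hx

theorem abs_prod_le_one {ι : Type*} {s : Finset ι} {a : ι → ℝ} (ha : ∀ i ∈ s, |a i| ≤ 1) :
    |∏ i ∈ s, a i| ≤ 1 := by
  rw [abs_prod]
  exact prod_le_one (fun _ _ => abs_nonneg _) ha

theorem abs_prod_sub_prod_le {ι : Type*} (s : Finset ι) {a b : ι → ℝ}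
    (ha : ∀ i ∈ s, |a i| ≤ 1) (hb : ∀ i ∈ s, |b i| ≤ 1) :
    |∏ i ∈ s, a i - ∏ i ∈ s, b i| ≤ ∑ i ∈ s, |a i - b i| := by
  classical
  induction s using Finset.induction_on with
  | empty => simp
  | insert i s hi ih =>
    rw [prod_insert hi, prod_insert hi, sum_insert hi]
    calc _ ≤ |a i - b i| + |b i| * |∏ j ∈ s, a j - ∏ j ∈ s, b j| :=
          abs_mul_sub_mul_le (abs_prod_le_one fun j hj => ha j (mem_insert_of_mem hj))
      _ ≤ |a i - b i| + 1 * ∑ j ∈ s, |a j - b j| := by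
          gcongr
          · exact hb i (mem_insert_self i s)
          · exact ih (fun j hj => ha j (mem_insert_of_mem hj))
              (fun j hj => hb j (mem_insert_of_mem hj))
      _ = |a i - b i| + ∑ j ∈ s, |a j - b j| := by rw [one_mul]

theorem abs_ite_one_sub_le_one (c : Prop) [Decidable c] {x : ℝ} (hx : x ∈ Set.Icc (0:ℝ) 1) :
    |if c then x else 1 - x| ≤ 1 := by
  rw [abs_le]
  split_ifs <;> constructor <;> linarith [hx.1, hx.2]

theorem abs_ite_one_sub_sub_ite (c : Prop) [Decidable c] (x y : ℝ) :
    |(if c then x else 1 - x) - (if c then y else 1 - y)| = |x - y| := by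
  split_ifs
  · rfl
  · rw [abs_sub_comm]; ring_nf

noncomputable def profileProb (f : ℕ → ℝ) (r m : ℕ) : ℝ :=
  (∏ l ∈ range r, f l) * ∏ l ∈ Ico r m, (1 - f l)

theorem profileProb_eq_prod_ite (f : ℕ → ℝ) {r m : ℕ} (hr : r ≤ m) :
    profileProb f r m = ∏ l ∈ range m, if l < r then f l else 1 - f l := by
  rw [profileProb, ← prod_range_mul_prod_Ico _ hr]
  congr 1
  · exact prod_congr rfl fun l hl => (if_pos (mem_range.1 hl)).symm
  · exact prod_congr rfl fun l hl => (if_neg (not_lt.2 (mem_Ico.1 hl).1)).symm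

theorem profileProb_const (p : ℝ) (r m : ℕ) :
    profileProb (fun _ => p) r m = p ^ r * (1 - p) ^ (m - r) := by
  simp [profileProb]

section

variable {f g : ℕ → ℝ} {r m : ℕ}

theorem abs_profileProb_sub_le_sum (hr : r ≤ m) (hf : ∀ l < m, f l ∈ Set.Icc (0:ℝ) 1)
    (hg : ∀ l < m, g l ∈ Set.Icc (0:ℝ) 1) :
    |profileProb f r m - profileProb g r m| ≤ ∑ l ∈ range m, |f l - g l| := by
  rw [profileProb_eq_prod_ite f hr, profileProb_eq_prod_ite g hr]
  refine (abs_prod_sub_prod_le _ (fun l hl => abs_ite_one_sub_le_one _ (hf l (mem_range.1 hl)))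
    (fun l hl => abs_ite_one_sub_le_one _ (hg l (mem_range.1 hl)))).trans_eq ?_
  exact sum_congr rfl fun l _ => abs_ite_one_sub_sub_ite _ _ _

theorem abs_profileProb_sub_le_head (hr0 : 0 < r) (hr : r ≤ m)
    (hf : ∀ l < m, f l ∈ Set.Icc (0:ℝ) 1) (hg : ∀ l < m, g l ∈ Set.Icc (0:ℝ) 1) :
    |profileProb f r m - profileProb g r m| ≤ |f 0 - g 0| + g 0 * ∑ l ∈ Ico 1 m, |f l - g l| := by
  have hm : 0 < m := hr0.trans_le hr
  have hIco : ∀ {h : ℕ → ℝ}, (∀ l < m, h l ∈ Set.Icc (0:ℝ) 1) →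
      ∀ l ∈ Ico 1 m, |if l < r then h l else 1 - h l| ≤ 1 :=
    fun hh l hl => abs_ite_one_sub_le_one _ (hh l (mem_Ico.1 hl).2)
  rw [profileProb_eq_prod_ite f hr, profileProb_eq_prod_ite g hr, prod_range_eq_mul_Ico _ hm,
    prod_range_eq_mul_Ico _ hm, if_pos hr0, if_pos hr0]
  refine (abs_mul_sub_mul_le (abs_prod_le_one (hIco hf))).trans ?_
  rw [abs_of_nonneg (hg 0 hm).1]
  gcongr
  · exact (hg 0 hm).1
  refine (abs_prod_sub_prod_le _ (hIco hf) (hIco hg)).trans_eq ?_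
  exact sum_congr rfl fun l _ => abs_ite_one_sub_sub_ite _ _ _

theorem abs_profileProb_sub_pow_le {p E ε : ℝ} (hr : r ≤ m)
    (hf : ∀ l < m, f l ∈ Set.Icc (0:ℝ) 1) (hp : p ∈ Set.Icc (0:ℝ) 1) (hE : 0 ≤ E) (hε : 0 ≤ ε)
    (hfE : ∀ l < m, l = 0 ∨ r = 0 → |f l - p| ≤ E) (hfε : ∀ l < m, |f l - p| ≤ ε) :
    |profileProb f r m - p ^ r * (1 - p) ^ (m - r)| ≤ m * E + p * (m * ε) := by
  rw [← profileProb_const]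
  have hp' : ∀ l < m, (fun _ => p) l ∈ Set.Icc (0:ℝ) 1 := fun _ _ => hp
  rcases Nat.eq_zero_or_pos r with rfl | hr0
  · calc _ ≤ ∑ l ∈ range m, |f l - p| := abs_profileProb_sub_le_sum hr hf hp'
      _ ≤ ∑ _l ∈ range m, E := sum_le_sum fun l hl => hfE l (mem_range.1 hl) (Or.inr rfl)
      _ = m * E := by simp
      _ ≤ m * E + p * (m * ε) := le_add_of_nonneg_right (by have := hp.1; positivity)
  · have hm : 0 < m := hr0.trans_le hr
    calc _ ≤ |f 0 - p| + p * ∑ l ∈ Ico 1 m, |f l - p| := abs_profileProb_sub_le_head hr0 hr hf hp'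
      _ ≤ E + p * ∑ _l ∈ Ico 1 m, ε := by
          gcongr with l hl
          · exact hfE 0 hm (Or.inl rfl)
          · exact hp.1
          · exact hfε l (mem_Ico.1 hl).2
      _ = E + p * ((m - 1 : ℕ) * ε) := by rw [sum_const, Nat.card_Ico, nsmul_eq_mul]
      _ ≤ m * E + p * (m * ε) := by
          gcongr
          · exact le_mul_of_one_le_left hE (by exact_mod_cast hm)
          · exact hp.1
          · exact_mod_cast Nat.sub_le m 1

end

/-- The paper's `p`. -/
noncomputable def indepConnProb (m : ℕ) (α n d : ℝ) : ℝ :=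
  α / (n - 1) + (1 - α) * d / (2 * m * (n - 2))

/-- The paper's `p_l(r)`. -/
noncomputable def seqConnProb (m : ℕ) (α n d : ℝ) (r l : ℕ) : ℝ :=
  (2 * m * α + (1 - α) * (d + min (l:ℝ) r)) / (2 * m * (n - 2) + 2 * m * α + (1 - α) * l)

section

variable {m : ℕ} {α n d : ℝ}

theorem indepConnProb_mem_Icc (hm : 0 < m) (hα : α ∈ Set.Icc (0:ℝ) 1) (hn : 2 < n) (hd : 0 ≤ d)
    (hd' : d ≤ 2 * m * (n - 2)) : indepConnProb m α n d ∈ Set.Icc (0:ℝ) 1 := by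
  obtain ⟨hα0, hα1⟩ := hα
  have hD : (0:ℝ) < 2 * m * (n - 2) := by positivity
  have h1 : α / (n - 1) ≤ α := div_le_self hα0 (by linarith)
  have h2 : (1 - α) * d / (2 * m * (n - 2)) ≤ 1 - α := by
    rw [div_le_iff₀ hD]; nlinarith
  constructor
  · unfold indepConnProb
    have : 0 ≤ 1 - α := by linarith
    have : 0 < n - 1 := by linarith
    positivity
  · unfold indepConnProb; linarith

theorem indepConnProb_le (hm : 0 < m) (hα : α ∈ Set.Icc (0:ℝ) 1) (hn : 2 < n) (hd : m ≤ d) :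
    indepConnProb m α n d ≤ 2 * d / (n - 2) := by
  obtain ⟨hα0, hα1⟩ := hα
  have hm1 : (1:ℝ) ≤ m := by exact_mod_cast hm
  have h1 : α / (n - 1) ≤ d / (n - 2) := by
    gcongr <;> linarith
  have hn2 : 0 < n - 2 := by linarith
  have hd0 : 0 ≤ d := by linarith
  have h2 : (1 - α) * d / (2 * m * (n - 2)) ≤ d / (n - 2) :=
    calc _ ≤ d / (2 * m * (n - 2)) := by gcongr; nlinarith
      _ ≤ d / (n - 2) := by gcongr; nlinarith
  unfold indepConnProb
  linarith [show 2 * d / (n - 2) = d / (n - 2) + d / (n - 2) by ring]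

theorem seqConnProb_mem_Icc (hm : 0 < m) (hα : α ∈ Set.Icc (0:ℝ) 1) (hn : 2 < n) (hd : 0 ≤ d)
    (hd' : d ≤ 2 * m * (n - 2)) (r l : ℕ) : seqConnProb m α n d r l ∈ Set.Icc (0:ℝ) 1 := by
  obtain ⟨hα0, hα1⟩ := hα
  have hμ : min (l:ℝ) r ≤ l := min_le_left _ _
  have hD : (0:ℝ) < 2 * m * (n - 2) := by positivity
  have h1α : 0 ≤ 1 - α := by linarith
  have hden : 0 < 2 * m * (n - 2) + 2 * m * α + (1 - α) * (l:ℝ) := by positivity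
  constructor
  · unfold seqConnProb; positivity
  · rw [seqConnProb, div_le_one hden]
    nlinarith [mul_le_mul_of_nonneg_left hμ h1α]

theorem seqConnProb_sub_indepConnProb (hm : 0 < m) (hα : α ∈ Set.Icc (0:ℝ) 1) (hn : 2 < n)
    (r l : ℕ) :
    seqConnProb m α n d r l - indepConnProb m α n d =
      -((2 * m * α + (1 - α) * d) * (2 * m * α + (1 - α) * l) /
          ((2 * m * (n - 2) + 2 * m * α + (1 - α) * l) * (2 * m * (n - 2)))) +
        α / ((n - 1) * (n - 2)) +
        (1 - α) * min (l:ℝ) r / (2 * m * (n - 2) + 2 * m * α + (1 - α) * l) := by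
  obtain ⟨hα0, hα1⟩ := hα
  have : (0:ℝ) < m := by exact_mod_cast hm
  have : 0 < n - 2 := by linarith
  have : 0 ≤ 1 - α := by linarith
  have : 2 * m * (n - 2) + 2 * m * α + (1 - α) * (l:ℝ) ≠ 0 := by positivity
  have : n - 1 ≠ 0 := by linarith
  unfold seqConnProb indepConnProb
  generalize hE : 2 * m * (n - 2) + 2 * m * α + (1 - α) * (l:ℝ) = E at *
  field_simp
  subst hE
  ring

theorem abs_seqConnProb_sub_indepConnProb_le (hm : 0 < m) (hα : α ∈ Set.Icc (0:ℝ) 1)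
    (hn : 2 < n) (hd : m ≤ d) {l : ℕ} (hl : l < m) (r : ℕ) :
    |seqConnProb m α n d r l - indepConnProb m α n d| ≤
      2 * d / (n - 2) ^ 2 + min (l:ℝ) r / (2 * m * (n - 2)) := by
  rw [seqConnProb_sub_indepConnProb hm hα hn]
  obtain ⟨hα0, hα1⟩ := hα
  have hm1 : (1:ℝ) ≤ m := by exact_mod_cast hm
  have hlm : (l:ℝ) ≤ m := by exact_mod_cast hl.le
  have hn2 : 0 < n - 2 := by linarith
  have hn1 : 0 < n - 1 := by linarith
  have hd0 : 0 ≤ d := by linarith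
  have h1α : 0 ≤ 1 - α := by linarith
  have hμ : 0 ≤ min (l:ℝ) r := by positivity
  set D := 2 * m * (n - 2) with hD
  have hD0 : 0 < D := by positivity
  set e := 2 * m * α + (1 - α) * l with he
  have he0 : 0 ≤ e := by positivity
  have hA : 2 * m * α + (1 - α) * d ≤ 2 * d := by nlinarith
  have he2 : e ≤ 2 * m := by nlinarith
  have hT1 : (2 * m * α + (1 - α) * d) * e / ((D + e) * D) ≤ d / (n - 2) ^ 2 :=
    calc _ ≤ (2 * d) * (2 * m) / (D * D) := by
          gcongr
          linarith
      _ = d / (m * (n - 2) ^ 2) := by rw [hD]; field_simp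
      _ ≤ d / (n - 2) ^ 2 := div_le_div_of_nonneg_left (by linarith) (by positivity)
          (le_mul_of_one_le_left (by positivity) hm1)
  have hT2 : α / ((n - 1) * (n - 2)) ≤ d / (n - 2) ^ 2 := by
    rw [sq]
    gcongr <;> linarith
  have hT3 : (1 - α) * min (l:ℝ) r / (D + e) ≤ min (l:ℝ) r / D := by
    gcongr
    · nlinarith [mul_nonneg hα0 hμ]
    · linarith
  have hDe : D + 2 * m * α + (1 - α) * l = D + e := by rw [he]; ring
  rw [hDe]
  calc _ ≤ |-((2 * m * α + (1 - α) * d) * e / ((D + e) * D))| + |α / ((n - 1) * (n - 2))|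
        + |(1 - α) * min (l:ℝ) r / (D + e)| := abs_add_three _ _ _
    _ ≤ _ := by
      rw [abs_neg, abs_of_nonneg (by positivity), abs_of_nonneg (by positivity),
        abs_of_nonneg (div_nonneg (mul_nonneg h1α hμ) (by positivity))]
      linarith [show 2 * d / (n - 2) ^ 2 = d / (n - 2) ^ 2 + d / (n - 2) ^ 2 by ring]

theorem abs_profileProb_seqConnProb_sub_le (hm : 0 < m) (hα : α ∈ Set.Icc (0:ℝ) 1) (hn : 2 < n)
    (hd : m ≤ d) (hd' : d ≤ 2 * m * (n - 2)) {r : ℕ} (hr : r ≤ m) :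
    |profileProb (seqConnProb m α n d r) r m -
        indepConnProb m α n d ^ r * (1 - indepConnProb m α n d) ^ (m - r)| ≤
      11 * m ^ 2 * d / (n - 2) ^ 2 := by
  have hm1 : (1:ℝ) ≤ m := by exact_mod_cast hm
  have hn2 : 0 < n - 2 := by linarith
  have hd0 : 0 ≤ d := by linarith
  have herr := fun {l : ℕ} (hl : l < m) =>
    abs_seqConnProb_sub_indepConnProb_le hm hα hn hd hl r
  have hE : ∀ l < m, l = 0 ∨ r = 0 →
      |seqConnProb m α n d r l - indepConnProb m α n d| ≤ 2 * d / (n - 2) ^ 2 := by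
    intro l hl hlr
    have hmin : min (l:ℝ) r = 0 := by rcases hlr with rfl | rfl <;> simp
    simpa [hmin] using herr hl
  have hε : ∀ l < m, |seqConnProb m α n d r l - indepConnProb m α n d| ≤
      2 * d / (n - 2) ^ 2 + 1 / (2 * (n - 2)) := by
    intro l hl
    refine (herr hl).trans (add_le_add_right ?_ _)
    calc min (l:ℝ) r / (2 * m * (n - 2)) ≤ m / (2 * m * (n - 2)) := by
          gcongr
          exact (min_le_left _ _).trans (by exact_mod_cast hl.le)
      _ = 1 / (2 * (n - 2)) := by field_simp
  refine (abs_profileProb_sub_pow_le hr (fun l _ => seqConnProb_mem_Icc hm hα hn hd0 hd' r l)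
    (indepConnProb_mem_Icc hm hα hn hd0 hd') (by positivity) (by positivity) hE hε).trans ?_
  have hp := indepConnProb_le hm hα hn hd
  set x := d / (n - 2) with hx
  set y := 1 / (n - 2) with hy
  have hxy : d / (n - 2) ^ 2 = x * y := by rw [hx, hy]; field_simp
  have hx2m : x ≤ 2 * m := by rw [hx, div_le_iff₀ hn2]; linarith
  rw [mul_div_assoc, mul_div_assoc, hxy, show 1 / (2 * (n - 2)) = y / 2 by rw [hy]; field_simp]
  rw [mul_div_assoc, ← hx] at hp
  calc _ ≤ m * (2 * (x * y)) + 2 * x * (m * (2 * (x * y) + y / 2)) := by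
        gcongr
    _ = m * (x * y) * (3 + 4 * x) := by ring
    _ ≤ m * (x * y) * (11 * m) := by gcongr; linarith
    _ = 11 * m ^ 2 * (x * y) := by ring

end

/-- There is a constant `C < ∞` depending only on `m` and `α` such that for any
integer `n ≥ 3` and any real `d` with `m ≤ d ≤ 2m(n-2)`, setting
`p = α/(n-1) + (1-α)d/(2m(n-2))` and
`p_l(r) = (2mα + (1-α)(d + min(l,r)))/(2m(n-2) + 2mα + (1-α)l)`, one has
`max_{0 ≤ r ≤ m} |∏_{l=0}^{r-1} p_l(r) ∏_{l=r}^{m-1} (1 - p_l(r)) − p^r (1-p)^(m-r)|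
   ≤ C d/n²`. -/
theorem coupling_probability_estimate (m : ℕ) (hm : 2 ≤ m) (α : ℝ)
    (hα : α ∈ Set.Ico (0:ℝ) 1) :
    ∃ C : ℝ, ∀ n : ℕ, 3 ≤ n → ∀ d : ℝ, (m:ℝ) ≤ d → d ≤ 2*m*((n:ℝ) - 2) →
      ∀ r : ℕ, r ≤ m →
        |(∏ l ∈ Finset.range r,
              (2*m*α + (1 - α)*(d + min (l:ℝ) (r:ℝ))) /
                (2*m*((n:ℝ) - 2) + 2*m*α + (1 - α)*(l:ℝ))) *
            (∏ l ∈ Finset.Ico r m,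
              (1 - (2*m*α + (1 - α)*(d + min (l:ℝ) (r:ℝ))) /
                (2*m*((n:ℝ) - 2) + 2*m*α + (1 - α)*(l:ℝ)))) -
          (α/((n:ℝ) - 1) + (1 - α)*d/(2*m*((n:ℝ) - 2))) ^ r *
            (1 - (α/((n:ℝ) - 1) + (1 - α)*d/(2*m*((n:ℝ) - 2)))) ^ (m - r)| ≤
        C * d / (n:ℝ) ^ 2 := by
  refine ⟨99 * m ^ 2, fun n hn d hd hd' r hr => ?_⟩
  have hn3 : (3:ℝ) ≤ n := by exact_mod_cast hn
  have hsq : (n:ℝ) ^ 2 ≤ 9 * ((n:ℝ) - 2) ^ 2 := by nlinarith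
  have hmd : 0 ≤ (m:ℝ) ^ 2 * d := mul_nonneg (sq_nonneg _) ((Nat.cast_nonneg m).trans hd)
  calc _ ≤ 11 * m ^ 2 * d / ((n:ℝ) - 2) ^ 2 :=
        abs_profileProb_seqConnProb_sub_le (by omega) (Set.Ico_subset_Icc_self hα) (by linarith)
          hd hd' hr
    _ ≤ 99 * m ^ 2 * d / (n:ℝ) ^ 2 := by
        rw [div_le_div_iff₀ (by nlinarith) (by positivity)]
        nlinarith [mul_le_mul_of_nonneg_left hsq hmd]
end

section
/- Let 0 < ψ ≤ 1, a > 0, and for x ∈ (0,1] set κ(x) = (1−x^ψ)/x^ψ. Then for every natural number k: (ψ+1) ∫_0^1 x^ψ · (Γ(k+a)/(k! Γ(a))) · κ(x)^k/(1+κ(x))^{k+a} dx = ((ψ+1)/ψ) · (Γ(a+1/ψ+1)/Γ(a)) · Γ(k+a)/Γ(a+1/ψ+k+2). Equivalently, if x_0 has density (ψ+1)x^ψ on [0,1], γ ~ Gamma(a,1) is independent, and D−m conditioned on (x_0,γ) is Poisson with mean γκ(x_0), then P(D = m+k) equals the right-hand side. -/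
/-!
Substituting `y = x ^ ψ` turns `κ(x)` into the odds `(1 - y) / y`, so that `1 + κ = y⁻¹` and the
integrand becomes a multiple of the Beta kernel `y ^ (a + 1 / ψ) * (1 - y) ^ k`; the Jacobian
`ψ * x ^ (ψ - 1)` is absorbed by one factor `x = y ^ (1 / ψ)`. The Beta integral
`B(a + 1/ψ + 1, k + 1) = Γ(a + 1/ψ + 1) k! / Γ(a + 1/ψ + k + 2)` then gives the formula.
-/

open MeasureTheory Real Set
open scoped Nat

theorem integral_Ioc_rpow_mul_one_sub_rpow {α β : ℝ} (hα : 0 < α) (hβ : 0 < β) :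
    ∫ x in Ioc (0:ℝ) 1, x ^ (α - 1) * (1 - x) ^ (β - 1) =
      Gamma α * Gamma β / Gamma (α + β) := by
  rw [← ProbabilityTheory.beta, ProbabilityTheory.beta_eq_betaIntegralReal α β hα hβ,
    Complex.betaIntegral, intervalIntegral.integral_of_le zero_le_one, ← RCLike.re_to_complex,
    ← integral_re]
  · refine setIntegral_congr_fun measurableSet_Ioc fun x ⟨hx0, hx1⟩ ↦ ?_
    norm_cast
    rw [← Complex.ofReal_cpow hx0.le, ← Complex.ofReal_cpow (by linarith), RCLike.re_to_complex,
      Complex.re_mul_ofReal, Complex.ofReal_re]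
  · exact (intervalIntegrable_iff_integrableOn_Ioc_of_le zero_le_one).mp
      (Complex.betaIntegral_convergent (by simpa) (by simpa))

theorem integral_Ioc_comp_rpow {E : Type*} [NormedAddCommGroup E] [NormedSpace ℝ E]
    (g : ℝ → E) {p : ℝ} (hp : 0 < p) :
    ∫ x in Ioc (0:ℝ) 1, (p * x ^ (p - 1)) • g (x ^ p) = ∫ y in Ioc (0:ℝ) 1, g y := by
  have restrict_Ioi : ∀ f : ℝ → E,
      ∫ x in Ioi 0, (Ioc 0 1).indicator f x = ∫ x in Ioc (0:ℝ) 1, f x := fun f ↦ by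
    rw [integral_indicator measurableSet_Ioc, Measure.restrict_restrict measurableSet_Ioc,
      Ioc_inter_Ioi, max_self]
  have mem_iff : ∀ x : ℝ, 0 < x → (x ^ p ∈ Ioc (0:ℝ) 1 ↔ x ∈ Ioc (0:ℝ) 1) := fun x hx ↦ by
    simp only [mem_Ioc, rpow_pos_of_pos hx, hx, true_and]
    exact rpow_le_one_iff_of_pos hx |>.trans ⟨by rintro (h | h) <;> [linarith [h.2]; exact h.1],
      fun h ↦ Or.inr ⟨h, hp.le⟩⟩
  rw [← restrict_Ioi g, ← integral_comp_rpow_Ioi_of_pos hp, ← restrict_Ioi]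
  refine setIntegral_congr_fun measurableSet_Ioi fun x (hx : 0 < x) ↦ ?_
  by_cases hx1 : x ∈ Ioc (0:ℝ) 1
  · simp [indicator_of_mem hx1, indicator_of_mem ((mem_iff x hx).mpr hx1)]
  · simp [indicator_of_notMem hx1, indicator_of_notMem (mt (mem_iff x hx).mp hx1)]

theorem odds_pow_div_one_add_odds_rpow {y : ℝ} (hy : 0 < y) (k : ℕ) (a : ℝ) :
    ((1 - y) / y) ^ k / (1 + (1 - y) / y) ^ ((k : ℝ) + a) = y ^ a * (1 - y) ^ k := by
  have one_add_odds : 1 + (1 - y) / y = y⁻¹ := by field_simp; ring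
  rw [one_add_odds, inv_rpow hy.le, rpow_add hy, rpow_natCast, div_pow]
  field_simp

/-- Let `0 < ψ ≤ 1`, `a > 0`, and for `x ∈ (0,1]` set `κ(x) = (1-x^ψ)/x^ψ`.
Then for every natural number `k`:
`(ψ+1) ∫_0^1 x^ψ · (Γ(k+a)/(k! Γ(a))) · κ(x)^k/(1+κ(x))^(k+a) dx
   = ((ψ+1)/ψ) · (Γ(a+1/ψ+1)/Γ(a)) · Γ(k+a)/Γ(a+1/ψ+k+2)`.
This is the limiting degree distribution `P(D = m+k)` of the root of the Pólya-point graph. -/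
theorem polya_point_root_degree_distribution (ψ a : ℝ) (hψ : ψ ∈ Set.Ioc (0:ℝ) 1)
    (ha : 0 < a) (k : ℕ) :
    (ψ + 1) * ∫ x in Set.Ioc (0:ℝ) 1,
        x ^ ψ * ((Real.Gamma (k + a) / (Nat.factorial k * Real.Gamma a)) *
          (((1 - x ^ ψ) / x ^ ψ) ^ k /
            (1 + (1 - x ^ ψ) / x ^ ψ) ^ ((k : ℝ) + a))) =
      ((ψ + 1) / ψ) * (Real.Gamma (a + 1/ψ + 1) / Real.Gamma a) *
        (Real.Gamma (k + a) / Real.Gamma (a + 1/ψ + k + 2)) := by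
  obtain ⟨hψ0, -⟩ := hψ
  set C : ℝ := Gamma (k + a) / (k ! * Gamma a)
  set b := a + 1 / ψ + 1
  have hb : 0 < b := by positivity
  have integrand_eq : ∀ x ∈ Ioc (0:ℝ) 1,
      x ^ ψ * (C * (((1 - x ^ ψ) / x ^ ψ) ^ k / (1 + (1 - x ^ ψ) / x ^ ψ) ^ ((k : ℝ) + a))) =
        (ψ * x ^ (ψ - 1)) • (C / ψ * ((x ^ ψ) ^ (b - 1) * (1 - x ^ ψ) ^ ((k + 1 : ℝ) - 1))) := by
    rintro x ⟨hx, -⟩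
    have hxψ : 0 < x ^ ψ := rpow_pos_of_pos hx ψ
    have hpow : (x ^ ψ) ^ (b - 1) = (x ^ ψ) ^ a * x := by
      rw [show b - 1 = a + 1 / ψ by ring, rpow_add hxψ, ← rpow_mul hx.le ψ (1 / ψ),
        mul_one_div_cancel hψ0.ne', rpow_one]
    rw [odds_pow_div_one_add_odds_rpow hxψ, hpow, add_sub_cancel_right, rpow_natCast,
      rpow_sub_one hx.ne', smul_eq_mul]
    field_simp
  rw [setIntegral_congr_fun measurableSet_Ioc integrand_eq,
    integral_Ioc_comp_rpow (fun y ↦ C / ψ * (y ^ (b - 1) * (1 - y) ^ ((k + 1 : ℝ) - 1))) hψ0,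
    integral_const_mul, integral_Ioc_rpow_mul_one_sub_rpow hb (by positivity),
    Gamma_nat_eq_factorial, show b + (k + 1) = a + 1 / ψ + k + 2 by ring]
  simp only [C]
  field_simp
end

section
/- Let 0 < ψ ≤ 1, a > 0, and for y ∈ (0,1] set κ(y) = (1−y^ψ)/y^ψ. Then for every natural number k: (ψ+1) ∫_0^1 x^{ψ−1} ∫_0^x (Γ(k+a+1)/(k! Γ(a+1))) · κ(y)^k/(1+κ(y))^{k+a+1} dy dx = ((ψ+1)/ψ²) · (Γ(a+1/ψ+1)/Γ(a+1)) · (k+1)Γ(k+a+1)/Γ(a+1/ψ+k+3). Equivalently, if x_0 has density (ψ+1)x^ψ on [0,1], y_0 given x_0 is uniform on [0,x_0], γ' ~ Gamma(a+1,1) is independent, and D'−m−1 conditioned on (y_0,γ') is Poisson with mean γ'κ(y_0), then P(D' = m+1+k) equals the right-hand side. -/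
open MeasureTheory Real Set

/-!
Put `s = y ^ ψ`. Then `1 + κ(y) = 1 / s`, so the inner integrand is a constant times
`(1 - s) ^ k * s ^ (a + 1)`. Exchanging the order of integration, the outer weight `x ^ (ψ - 1)`
integrates over `[y, 1]` to `(1 - y ^ ψ) / ψ`, and the substitution `t = y ^ ψ` turns what is left
into the Beta integral `B(a + 1/ψ + 1, k + 2)`.
-/

lemma image_rpow_Ioc_zero_one {p : ℝ} (hp : 0 < p) :
    (fun x : ℝ => x ^ p) '' Ioc 0 1 = Ioc 0 1 := by
  ext y
  constructor
  · rintro ⟨x, ⟨hx0, hx1⟩, rfl⟩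
    exact ⟨rpow_pos_of_pos hx0 p, rpow_le_one hx0.le hx1 hp.le⟩
  · rintro ⟨hy0, hy1⟩
    refine ⟨y ^ p⁻¹, ⟨rpow_pos_of_pos hy0 _, rpow_le_one hy0.le hy1 (inv_pos.2 hp).le⟩, ?_⟩
    show (y ^ p⁻¹) ^ p = y
    rw [← rpow_mul hy0.le, inv_mul_cancel₀ hp.ne', rpow_one]

theorem integral_comp_rpow_Ioc_zero_one {E : Type*} [NormedAddCommGroup E] [NormedSpace ℝ E]
    (g : ℝ → E) {p : ℝ} (hp : 0 < p) :
    ∫ x in Ioc 0 1, (p * x ^ (p - 1)) • g (x ^ p) = ∫ y in Ioc 0 1, g y := by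
  have h := integral_image_eq_integral_abs_deriv_smul measurableSet_Ioc
    (fun x (hx : x ∈ Ioc 0 1) => (hasDerivAt_rpow_const (Or.inl hx.1.ne')).hasDerivWithinAt)
    ((rpow_left_injOn hp.ne').mono fun x (hx : x ∈ Ioc (0 : ℝ) 1) => hx.1.le) g
  rw [image_rpow_Ioc_zero_one hp] at h
  rw [h]
  refine setIntegral_congr_fun measurableSet_Ioc fun x hx => ?_
  rw [abs_of_pos (by have := hx.1; positivity)]

theorem integral_rpow_mul_one_sub_rpow {α β : ℝ} (hα : 0 < α) (hβ : 0 < β) :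
    ∫ x in Ioc 0 1, x ^ (α - 1) * (1 - x) ^ (β - 1) = Gamma α * Gamma β / Gamma (α + β) := by
  rw [← ProbabilityTheory.beta, ProbabilityTheory.beta_eq_betaIntegralReal α β hα hβ,
    Complex.betaIntegral, intervalIntegral.integral_of_le zero_le_one, ← RCLike.re_to_complex,
    ← integral_re]
  · refine setIntegral_congr_fun measurableSet_Ioc fun x ⟨hx0, hx1⟩ => ?_
    norm_cast
    rw [← Complex.ofReal_cpow hx0.le, ← Complex.ofReal_cpow (by linarith), RCLike.re_to_complex,
      Complex.re_mul_ofReal, Complex.ofReal_re]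
  · have := Complex.betaIntegral_convergent (u := α) (v := β) (by simpa) (by simpa)
    rwa [intervalIntegrable_iff_integrableOn_Ioc_of_le zero_le_one] at this

theorem integral_one_sub_rpow_pow_mul_rpow {p c : ℝ} (hp : 0 < p) (hc : 0 < c + 1 / p) (n : ℕ) :
    ∫ y in Ioc 0 1, (1 - y ^ p) ^ n * (y ^ p) ^ c
      = Gamma (c + 1 / p) * n.factorial / (p * Gamma (c + 1 / p + n + 1)) := by
  have hsubst : ∫ y in Ioc 0 1, (1 - y ^ p) ^ n * (y ^ p) ^ c
      = 1 / p * ∫ t in Ioc 0 1, t ^ ((c + 1 / p) - 1) * (1 - t) ^ (((n : ℝ) + 1) - 1) := by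
    rw [← integral_comp_rpow_Ioc_zero_one _ (one_div_pos.2 hp), ← integral_const_mul]
    refine setIntegral_congr_fun measurableSet_Ioc fun t ht => ?_
    have hroot : (t ^ (1 / p)) ^ p = t := by
      rw [← rpow_mul ht.1.le, one_div_mul_cancel hp.ne', rpow_one]
    rw [smul_eq_mul, hroot, add_sub_cancel_right, rpow_natCast, add_sub_assoc, rpow_add ht.1]
    ring
  rw [hsubst, integral_rpow_mul_one_sub_rpow hc (by positivity), Gamma_nat_eq_factorial,
    ← add_assoc]
  ring

theorem integral_mul_integral_Ioc_swap {f g : ℝ → ℝ} {a b : ℝ}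
    (hf : IntegrableOn f (Ioc a b)) (hg : IntegrableOn g (Ioc a b)) :
    ∫ x in Ioc a b, f x * ∫ y in Ioc a x, g y = ∫ y in Ioc a b, g y * ∫ x in Icc y b, f x := by
  set μ := volume.restrict (Ioc a b)
  set F : ℝ × ℝ → ℝ := {q | q.2 ≤ q.1}.indicator fun q => f q.1 * g q.2
  have hF : Integrable F (μ.prod μ) :=
    (hf.mul_prod hg).indicator (measurableSet_le measurable_snd measurable_fst)
  calc ∫ x in Ioc a b, f x * ∫ y in Ioc a x, g y
      = ∫ x, ∫ y, F (x, y) ∂μ ∂μ := by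
        refine setIntegral_congr_fun measurableSet_Ioc fun x hx => ?_
        have hsec : Iic x ∩ Ioc a b = Ioc a x := by
          ext y; simp only [mem_inter_iff, mem_Ioc, mem_Iic]
          exact ⟨fun h => ⟨h.2.1, h.1⟩, fun h => ⟨h.2, h.1, h.2.trans hx.2⟩⟩
        change _ = ∫ y, (Iic x).indicator (fun y => f x * g y) y ∂μ
        rw [integral_indicator measurableSet_Iic, Measure.restrict_restrict measurableSet_Iic,
          hsec, integral_const_mul]
    _ = ∫ y, ∫ x, F (x, y) ∂μ ∂μ := integral_integral_swap hF
    _ = ∫ y in Ioc a b, g y * ∫ x in Icc y b, f x := by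
        refine setIntegral_congr_fun measurableSet_Ioc fun y hy => ?_
        have hsec : Ici y ∩ Ioc a b = Icc y b := by
          ext x; simp only [mem_inter_iff, mem_Ioc, mem_Ici, mem_Icc]
          exact ⟨fun h => ⟨h.1, h.2.2⟩, fun h => ⟨h.1, hy.1.trans_le h.1, h.2⟩⟩
        change ∫ x, (Ici y).indicator (fun x => f x * g y) x ∂μ = _
        rw [integral_indicator measurableSet_Ici, Measure.restrict_restrict measurableSet_Ici,
          hsec, integral_mul_const, mul_comm]

lemma integral_Icc_rpow_sub_one {p y : ℝ} (hp : 0 < p) (hy : y ≤ 1) :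
    ∫ x in Icc y 1, x ^ (p - 1) = (1 - y ^ p) / p := by
  rw [integral_Icc_eq_integral_Ioc, ← intervalIntegral.integral_of_le hy,
    integral_rpow (Or.inl (by linarith)), sub_add_cancel, one_rpow]

lemma div_pow_div_one_add_div_rpow {s : ℝ} (hs : 0 < s) (k : ℕ) (c : ℝ) :
    ((1 - s) / s) ^ k / (1 + (1 - s) / s) ^ ((k : ℝ) + c) = (1 - s) ^ k * s ^ c := by
  have h : 1 + (1 - s) / s = s⁻¹ := by field_simp; ring
  rw [h, inv_rpow hs.le, rpow_add hs, rpow_natCast, div_pow]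
  field_simp

/-- Let `0 < ψ ≤ 1`, `a > 0`, and for `y ∈ (0,1]` set `κ(y) = (1-y^ψ)/y^ψ`.
Then for every natural number `k`:
`(ψ+1) ∫_0^1 x^(ψ-1) ∫_0^x (Γ(k+a+1)/(k! Γ(a+1))) · κ(y)^k/(1+κ(y))^(k+a+1) dy dx
   = ((ψ+1)/ψ²) · (Γ(a+1/ψ+1)/Γ(a+1)) · (k+1)Γ(k+a+1)/Γ(a+1/ψ+k+3)`.
This is the limiting degree distribution `P(D' = m+1+k)` of a uniformly chosen earlier
neighbor of the root of the Pólya-point graph. -/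
theorem polya_point_neighbor_degree_distribution (ψ a : ℝ) (hψ : ψ ∈ Set.Ioc (0:ℝ) 1)
    (ha : 0 < a) (k : ℕ) :
    (ψ + 1) * ∫ x in Set.Ioc (0:ℝ) 1, x ^ (ψ - 1) *
        ∫ y in Set.Ioc (0:ℝ) x,
          (Real.Gamma (k + a + 1) / (Nat.factorial k * Real.Gamma (a + 1))) *
            (((1 - y ^ ψ) / y ^ ψ) ^ k /
              (1 + (1 - y ^ ψ) / y ^ ψ) ^ ((k : ℝ) + a + 1)) =
      ((ψ + 1) / ψ ^ 2) * (Real.Gamma (a + 1/ψ + 1) / Real.Gamma (a + 1)) *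
        ((k + 1) * Real.Gamma (k + a + 1) / Real.Gamma (a + 1/ψ + k + 3)) := by
  have hψ0 := hψ.1
  set C := Gamma (k + a + 1) / (k.factorial * Gamma (a + 1)) with hC
  set g : ℝ → ℝ := fun y => (1 - y ^ ψ) ^ k * (y ^ ψ) ^ (a + 1)
  have hinner : ∀ x, ∫ y in Ioc 0 x, C * (((1 - y ^ ψ) / y ^ ψ) ^ k /
      (1 + (1 - y ^ ψ) / y ^ ψ) ^ ((k : ℝ) + a + 1)) = C * ∫ y in Ioc 0 x, g y := fun x => by
    rw [← integral_const_mul]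
    refine setIntegral_congr_fun measurableSet_Ioc fun y hy => ?_
    rw [add_assoc, div_pow_div_one_add_div_rpow (rpow_pos_of_pos hy.1 ψ)]
  have hg : Continuous g := by
    have := continuous_rpow_const hψ0.le
    exact ((continuous_const.sub this).pow k).mul ((continuous_rpow_const (by linarith)).comp this)
  have hrpow : IntegrableOn (fun x : ℝ => x ^ (ψ - 1)) (Ioc 0 1) :=
    (intervalIntegrable_iff_integrableOn_Ioc_of_le zero_le_one).1
      (intervalIntegral.intervalIntegrable_rpow' (by linarith))
  have hfubini : ∫ x in Ioc 0 1, x ^ (ψ - 1) * ∫ y in Ioc 0 x, g y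
      = 1 / ψ * ∫ y in Ioc 0 1, (1 - y ^ ψ) ^ (k + 1) * (y ^ ψ) ^ (a + 1) := by
    rw [integral_mul_integral_Ioc_swap hrpow hg.integrableOn_Ioc, ← integral_const_mul]
    refine setIntegral_congr_fun measurableSet_Ioc fun y hy => ?_
    rw [integral_Icc_rpow_sub_one hψ0 hy.2]
    ring
  simp only [hinner, mul_left_comm _ C, integral_const_mul]
  rw [hfubini, integral_one_sub_rpow_pow_mul_rpow hψ0 (by positivity), hC]
  have hfact : (k.factorial : ℝ) ≠ 0 := by positivity
  have hGa : Gamma (a + 1) ≠ 0 := (Gamma_pos_of_pos (by linarith)).ne'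
  rw [Nat.factorial_succ, show a + 1 + 1 / ψ + ((k + 1 : ℕ) : ℝ) + 1 = a + 1 / ψ + k + 3 by
    push_cast; ring, add_right_comm a 1]
  push_cast
  field_simp
end

section
/- For all reals a > 0 and ψ ∈ (0,1] and all natural numbers k, j: ∫_0^1 (1−v)^k v^{a+1/ψ} ( ∫_0^v (1−u)^j u^a du ) dv ≤ (1/(a+1)) · k! · Γ(2a+1/ψ+2)/Γ(2a+1/ψ+k+3). -/
/-!
Bounding `(1 - u) ^ j` by `1` gives `∫_0^v (1-u)^j u^a du ≤ v^(a+1)/(a+1)`, so the double integral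
is at most `1/(a+1)` times the Beta integral `B(s, k + 1) = k! Γ(s)/Γ(s+k+1)` with
`s = 2a + 1/ψ + 2`.
-/

open MeasureTheory Real Set
open scoped Nat

theorem integral_rpow_mul_one_sub_pow {s : ℝ} (hs : 0 < s) (k : ℕ) :
    ∫ x in (0:ℝ)..1, x ^ (s - 1) * (1 - x) ^ k = k ! * (Gamma s / Gamma (s + k + 1)) := by
  have hbeta := Complex.Gamma_mul_Gamma_eq_betaIntegral (s := s) (t := k + 1)
    (by simpa using hs) (by simp; positivity)
  have hbeta_real : Complex.betaIntegral s (k + 1) =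
      ((∫ x in (0:ℝ)..1, x ^ (s - 1) * (1 - x) ^ k : ℝ) : ℂ) := by
    rw [Complex.betaIntegral, ← intervalIntegral.integral_ofReal]
    refine intervalIntegral.integral_congr fun x hx => ?_
    rw [uIcc_of_le zero_le_one] at hx
    have hexp : (s : ℂ) - 1 = ((s - 1 : ℝ) : ℂ) := by push_cast; ring
    rw [hexp, add_sub_cancel_right, ← Complex.ofReal_cpow hx.1, Complex.cpow_natCast]
    push_cast
    ring
  have hsum : (s : ℂ) + (k + 1) = ((s + k + 1 : ℝ) : ℂ) := by push_cast; ring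
  rw [hbeta_real, hsum, Complex.Gamma_ofReal, Complex.Gamma_ofReal,
    Complex.Gamma_nat_eq_factorial] at hbeta
  have hbeta' : Gamma s * k ! =
      Gamma (s + k + 1) * ∫ x in (0:ℝ)..1, x ^ (s - 1) * (1 - x) ^ k := by
    exact_mod_cast hbeta
  have hGamma_pos : 0 < Gamma (s + k + 1) := Gamma_pos_of_pos (by positivity)
  field_simp
  linarith

theorem setIntegral_Ioc_zero_rpow {a v : ℝ} (ha : -1 < a) (hv : 0 ≤ v) :
    ∫ u in Ioc 0 v, u ^ a = v ^ (a + 1) / (a + 1) := by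
  rw [← intervalIntegral.integral_of_le hv, integral_rpow (Or.inl ha),
    zero_rpow (by linarith : a + 1 ≠ 0), sub_zero]

theorem setIntegral_one_sub_pow_mul_rpow_le {a v : ℝ} (ha : -1 < a) (hv₀ : 0 ≤ v) (hv₁ : v ≤ 1)
    (j : ℕ) : ∫ u in Ioc 0 v, (1 - u) ^ j * u ^ a ≤ v ^ (a + 1) / (a + 1) := by
  have hint : IntervalIntegrable (fun u : ℝ => u ^ a) volume 0 v :=
    intervalIntegral.intervalIntegrable_rpow' ha
  rw [← setIntegral_Ioc_zero_rpow ha hv₀]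
  refine setIntegral_mono_on ?_ hint.1 measurableSet_Ioc fun u hu => ?_
  · exact (hint.continuousOn_mul (g := fun u : ℝ => (1 - u) ^ j) (by fun_prop)).1
  · exact mul_le_of_le_one_left (rpow_nonneg hu.1.le a)
      (pow_le_one₀ (by linarith [hu.2]) (by linarith [hu.1]))

theorem setIntegral_one_sub_pow_mul_rpow_nonneg {a v : ℝ} (hv : v ≤ 1) (j : ℕ) :
    0 ≤ ∫ u in Ioc 0 v, (1 - u) ^ j * u ^ a :=
  setIntegral_nonneg measurableSet_Ioc fun u hu =>
    mul_nonneg (pow_nonneg (by linarith [hu.2]) j) (rpow_nonneg hu.1.le a)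

theorem integral_one_sub_pow_mul_rpow_mul_integral_le {a b : ℝ} (ha : -1 < a)
    (hab : 0 < a + b + 2) (k j : ℕ) :
    ∫ v in Ioc (0:ℝ) 1, (1 - v) ^ k * v ^ b * ∫ u in Ioc (0:ℝ) v, (1 - u) ^ j * u ^ a ≤
      1 / (a + 1) * k ! * (Gamma (a + b + 2) / Gamma (a + b + k + 3)) := by
  have hweight_nonneg : ∀ v ∈ Ioc (0:ℝ) 1, 0 ≤ (1 - v) ^ k * v ^ b := fun v hv =>
    mul_nonneg (pow_nonneg (by linarith [hv.2]) k) (rpow_nonneg hv.1.le b)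
  have hpointwise : ∀ v ∈ Ioc (0:ℝ) 1,
      (1 - v) ^ k * v ^ b * ∫ u in Ioc (0:ℝ) v, (1 - u) ^ j * u ^ a ≤
        1 / (a + 1) * (v ^ (a + b + 1) * (1 - v) ^ k) := fun v hv => calc
    _ ≤ (1 - v) ^ k * v ^ b * (v ^ (a + 1) / (a + 1)) := by
      gcongr
      · exact hweight_nonneg v hv
      · exact setIntegral_one_sub_pow_mul_rpow_le ha hv.1.le hv.2 j
    _ = 1 / (a + 1) * ((1 - v) ^ k * (v ^ b * v ^ (a + 1))) := by ring
    _ = _ := by rw [← rpow_add hv.1]; ring_nf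
  have hbound_int : IntegrableOn (fun v : ℝ => 1 / (a + 1) * (v ^ (a + b + 1) * (1 - v) ^ k))
      (Ioc 0 1) :=
    (((intervalIntegral.intervalIntegrable_rpow' (by linarith)).mul_continuousOn
      (g := fun v : ℝ => (1 - v) ^ k) (by fun_prop)).1).const_mul _
  calc _ ≤ ∫ v in Ioc (0:ℝ) 1, 1 / (a + 1) * (v ^ (a + b + 1) * (1 - v) ^ k) := by
        refine integral_mono_of_nonneg ?_ hbound_int ?_
        · filter_upwards [ae_restrict_mem measurableSet_Ioc] with v hv
          exact mul_nonneg (hweight_nonneg v hv) (setIntegral_one_sub_pow_mul_rpow_nonneg hv.2 j)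
        · filter_upwards [ae_restrict_mem measurableSet_Ioc] with v hv using hpointwise v hv
    _ = _ := by
      rw [integral_const_mul, ← intervalIntegral.integral_of_le zero_le_one,
        show a + b + 1 = a + b + 2 - 1 by ring, integral_rpow_mul_one_sub_pow hab k,
        show a + b + 2 + k + 1 = a + b + k + 3 by ring, mul_assoc]

/-- For all reals `a > 0` and `ψ ∈ (0,1]` and all natural numbers `k, j`:
`∫_0^1 (1-v)^k v^(a+1/ψ) (∫_0^v (1-u)^j u^a du) dv
   ≤ (1/(a+1)) · k! · Γ(2a+1/ψ+2)/Γ(2a+1/ψ+k+3)`. -/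
theorem joint_degree_double_integral_bound (a ψ : ℝ) (ha : 0 < a)
    (hψ : ψ ∈ Set.Ioc (0:ℝ) 1) (k j : ℕ) :
    ∫ v in Set.Ioc (0:ℝ) 1, (1 - v) ^ k * v ^ (a + 1/ψ) *
        ∫ u in Set.Ioc (0:ℝ) v, (1 - u) ^ j * u ^ a ≤
      (1 / (a + 1)) * (Nat.factorial k) *
        (Real.Gamma (2*a + 1/ψ + 2) / Real.Gamma (2*a + 1/ψ + k + 3)) := by
  have hψ₀ := hψ.1
  have hbound := integral_one_sub_pow_mul_rpow_mul_integral_le (a := a) (b := a + 1 / ψ)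
    (by linarith) (by positivity) k j
  rwa [show a + (a + 1 / ψ) = 2 * a + 1 / ψ by ring] at hbound
end
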